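/- (Appendix, second part: derivability of the intended stage relations.) With G and I as defined (G the semantic stage-axiom operator on quintuples of relations on α, I the intended quintuple of stage-ordering relations): every element of I is contained in the least fixed point of G. Together with G(I) = I this yields lfp G = I. Concretely: for every pair (a,b) and every component X ∈ {≺, ⪯, ⊀, ⋠, ◁}, if (a,b) ∈ I_X then (a,b) belongs to the X-component of ⨆-iteration of G from the empty quintuple (the proof is by strong induction on stage(b)). -/

import Mathlib

/- The stage of an atom `a` under the staged fixed-point computation
(Algorithm 2): the least `l` with `a ∈ F^[l] ∅` if `a` belongs to the
fixed point `F^[f] ∅`, and `f + 1` otherwise. -/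
open Classical in
noncomputable def stage {α : Type*} (F : Set α → Set α) (f : ℕ) (a : α) : ℕ :=
  if a ∈ F^[f] (∅ : Set α) then sInf {l : ℕ | a ∈ F^[l] (∅ : Set α)} else f + 1

/- A quintuple of binary relations on `α`, in the order
(≺ strictly-before, ⪯ before, ⊀ not-strictly-before, ⋠ not-before,
◁ immediately-before). -/
abbrev Quint (α : Type*) :=
  Set (α × α) × Set (α × α) × Set (α × α) × Set (α × α) × Set (α × α)

namespace Quint

variable {α : Type*}

def lt (R : Quint α) : Set (α × α) := R.1
def le (R : Quint α) : Set (α × α) := R.2.1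
def nlt (R : Quint α) : Set (α × α) := R.2.2.1
def nle (R : Quint α) : Set (α × α) := R.2.2.2.1
def imm (R : Quint α) : Set (α × α) := R.2.2.2.2

end Quint

/- The semantic stage-axiom operator (equations (1)–(5) of the paper). -/
def G {α : Type*} (F : Set α → Set α) (R : Quint α) : Quint α :=
  ({p : α × α | ∃ c : α, (p.1, c) ∈ R.le ∧ (c, p.2) ∈ R.imm},
   {p : α × α | p.1 ∈ F {c : α | (c, p.2) ∈ R.lt}},
   {p : α × α | p.2 ∈ F ∅ ∨
      (∃ c : α, (p.1, c) ∈ R.nle ∧ (c, p.2) ∈ R.imm) ∨ F ∅ = ∅},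
   {p : α × α | p.1 ∉ F {c : α | (c, p.2) ∉ R.nlt}},
   {p : α × α | p.1 ∈ F {c : α | (c, p.1) ∈ R.lt} ∧
      p.2 ∉ F {c : α | (c, p.1) ∉ R.nlt} ∧
      (p.2 ∈ F {c : α | (c, p.1) ∈ R.le} ∨
        ∀ c : α, c ∈ F {c' : α | (c', p.1) ∉ R.nle} →
          c ∈ F {c' : α | (c', p.1) ∈ R.lt})})

/- The intended quintuple of stage-ordering relations. -/
noncomputable def I {α : Type*} (F : Set α → Set α) (f : ℕ) : Quint α :=
  ({p : α × α | stage F f p.1 < stage F f p.2},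
   {p : α × α | stage F f p.1 ≤ stage F f p.2 ∧ stage F f p.1 ≤ f},
   {p : α × α | stage F f p.1 ≥ stage F f p.2},
   {p : α × α | stage F f p.1 > stage F f p.2 ∨ stage F f p.1 = f + 1},
   {p : α × α | stage F f p.1 + 1 = stage F f p.2})

/-!
Let `U` be the limit of the iterates of `G F` from `⊥`; since `Quint α` is finite the chain
stabilises, so `G F U = U`. One then shows, by strong induction on `stage b`, that `U` contains
every pair `(a, b)` of `I F f`, deriving the five components in the order `◁, ≺, ⊀, ⪯, ⋠`.
Everything rests on `F^[l] ∅ = {a | stage a ≤ min l f}`: applied to the relations of the lower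
columns, each defining clause of `G` becomes a statement about `F` of a stage-bounded set, that
is, about a stage of the iteration. The minimality of `f` supplies, for every `1 ≤ m ≤ f`, an
atom of stage exactly `m`, which serves as the intermediate point in the `≺` and `⊀` clauses.
-/

theorem Monotone.map_iSup_iterate_bot {β : Type*} [CompleteLattice β] [WellFoundedGT β]
    {g : β → β} (hg : Monotone g) : g (⨆ n, g^[n] ⊥) = ⨆ n, g^[n] ⊥ := by
  have hmono : Monotone fun n => g^[n] ⊥ := hg.monotone_iterate_of_le_map bot_le
  obtain ⟨N, hN⟩ := WellFoundedGT.monotone_chain_condition ⟨_, hmono⟩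
  have hsup : ⨆ n, g^[n] ⊥ = g^[N] ⊥ := by
    refine le_antisymm (iSup_le fun n => ?_) (le_iSup (fun n => g^[n] ⊥) N)
    rcases le_total n N with h | h
    exacts [hmono h, (hN n h).ge]
  rw [hsup, ← Function.iterate_succ_apply' g N]
  exact (hN (N + 1) N.le_succ).symm

theorem monotone_G {α : Type*} {F : Set α → Set α} (hF : Monotone F) : Monotone (G F) := by
  rintro R R' ⟨hlt, hle, hnlt, hnle, himm⟩
  have hF_lt (a : α) : F {c | (c, a) ∈ R.lt} ⊆ F {c | (c, a) ∈ R'.lt} := hF fun _ h => hlt h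
  have hF_le (a : α) : F {c | (c, a) ∈ R.le} ⊆ F {c | (c, a) ∈ R'.le} := hF fun _ h => hle h
  have hF_nlt (a : α) : F {c | (c, a) ∉ R'.nlt} ⊆ F {c | (c, a) ∉ R.nlt} :=
    hF fun _ hc h => hc (hnlt h)
  have hF_nle (a : α) : F {c | (c, a) ∉ R'.nle} ⊆ F {c | (c, a) ∉ R.nle} :=
    hF fun _ hc h => hc (hnle h)
  refine ⟨?_, fun p hp => hF_lt p.2 hp, ?_, fun p hp h => hp (hF_nlt p.2 h), ?_⟩
  · rintro p ⟨c, h1, h2⟩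
    exact ⟨c, hle h1, himm h2⟩
  · rintro p (hp | ⟨c, h1, h2⟩ | hp)
    exacts [Or.inl hp, Or.inr (Or.inl ⟨c, hnle h1, himm h2⟩), Or.inr (Or.inr hp)]
  · rintro p ⟨h1, h2, h3⟩
    exact ⟨hF_lt p.1 h1, fun h => h2 (hF_nlt p.1 h),
      h3.imp (fun h => hF_le p.1 h) fun h c hc => hF_lt p.1 (h c (hF_nle p.1 hc))⟩

section Stage

variable {α : Type*} {F : Set α → Set α} {f : ℕ}

theorem one_le_stage (a : α) : 1 ≤ stage F f a := by
  unfold stage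
  split_ifs with ha
  · refine Nat.one_le_iff_ne_zero.2 fun h0 => ?_
    have hmem := Nat.sInf_mem (⟨f, ha⟩ : {l | a ∈ F^[l] (∅ : Set α)}.Nonempty)
    rw [h0] at hmem
    exact hmem
  · omega

theorem stage_le_succ (a : α) : stage F f a ≤ f + 1 := by
  unfold stage
  split_ifs with ha
  exacts [(Nat.sInf_le ha).trans f.le_succ, le_rfl]

theorem iterate_empty_eq_of_le (hf : F^[f + 1] ∅ = F^[f] ∅) {l : ℕ} (hl : f ≤ l) :
    F^[l] ∅ = F^[f] ∅ := by
  have hfix : Function.IsFixedPt F (F^[f] ∅) := by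
    rwa [Function.iterate_succ_apply'] at hf
  rw [← Nat.sub_add_cancel hl, Function.iterate_add_apply, hfix.iterate]

theorem mem_iterate_empty_iff (hF : Monotone F) (hf : F^[f + 1] ∅ = F^[f] ∅) (a : α) (l : ℕ) :
    a ∈ F^[l] ∅ ↔ stage F f a ≤ l ∧ stage F f a ≤ f := by
  have hS : Monotone fun l => F^[l] (∅ : Set α) := hF.monotone_iterate_of_le_map (Set.empty_subset _)
  by_cases ha : a ∈ F^[f] ∅
  · have hne : {l | a ∈ F^[l] (∅ : Set α)}.Nonempty := ⟨f, ha⟩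
    have hs : stage F f a = sInf {l | a ∈ F^[l] (∅ : Set α)} := if_pos ha
    rw [hs]
    exact ⟨fun hl => ⟨Nat.sInf_le hl, Nat.sInf_le ha⟩, fun h => hS h.1 (Nat.sInf_mem hne)⟩
  · have hs : stage F f a = f + 1 := if_neg ha
    refine ⟨fun hl => absurd ?_ ha, fun h => by omega⟩
    rcases le_total l f with h | h
    exacts [hS h hl, iterate_empty_eq_of_le hf h ▸ hl]

theorem exists_stage_eq (hF : Monotone F) (hf : F^[f + 1] ∅ = F^[f] ∅)
    (hfmin : ∀ j : ℕ, F^[j + 1] ∅ = F^[j] ∅ → f ≤ j) {m : ℕ} (h1 : 1 ≤ m) (hm : m ≤ f) :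
    ∃ c : α, stage F f c = m := by
  have hssub : F^[m - 1] (∅ : Set α) ⊂ F^[m] ∅ := by
    refine LE.le.ssubset_of_ne
      (hF.monotone_iterate_of_le_map (Set.empty_subset _) (m.sub_le 1)) fun heq => ?_
    have := hfmin (m - 1) (by rw [Nat.sub_add_cancel h1, heq])
    omega
  obtain ⟨c, hc, hc'⟩ := Set.exists_of_ssubset hssub
  rw [mem_iterate_empty_iff hF hf] at hc hc'
  exact ⟨c, by omega⟩

theorem mem_map_setOf_stage_lt (hF : Monotone F) (hf : F^[f + 1] ∅ = F^[f] ∅) {a : α}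
    (ha : stage F f a ≤ f) : a ∈ F {c | stage F f c < stage F f a} := by
  obtain ⟨m, hm⟩ : ∃ m, stage F f a = m + 1 := ⟨_, (Nat.succ_pred_eq_of_pos (one_le_stage a)).symm⟩
  have hmem : a ∈ F^[m + 1] ∅ := (mem_iterate_empty_iff hF hf a _).2 ⟨hm.le, ha⟩
  rw [Function.iterate_succ_apply'] at hmem
  refine hF (fun c hc => ?_) hmem
  have := (mem_iterate_empty_iff hF hf c m).1 hc
  show stage F f c < stage F f a
  omega

theorem stage_le_of_mem_map (hF : Monotone F) (hf : F^[f + 1] ∅ = F^[f] ∅) {s : Set α} {x y : α}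
    (hs : s ⊆ {c | stage F f c < stage F f y}) (hx : x ∈ F s) :
    stage F f x ≤ stage F f y ∧ stage F f x ≤ f := by
  obtain ⟨m, hm⟩ : ∃ m, stage F f y = m + 1 := ⟨_, (Nat.succ_pred_eq_of_pos (one_le_stage y)).symm⟩
  have hsub : s ⊆ F^[m] ∅ := fun c hc => by
    have hc' : stage F f c < stage F f y := hs hc
    have := stage_le_succ (F := F) (f := f) y
    exact (mem_iterate_empty_iff hF hf c m).2 (by omega)
  have hmem : x ∈ F^[m + 1] ∅ := by
    rw [Function.iterate_succ_apply']
    exact hF hsub hx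
  rw [hm]
  exact (mem_iterate_empty_iff hF hf x _).1 hmem

end Stage

def IntendedColumnLE {α : Type*} (F : Set α → Set α) (f : ℕ) (U : Quint α) (b : α) : Prop :=
  ∀ a : α,
    (stage F f a < stage F f b → (a, b) ∈ U.lt) ∧
    (stage F f a ≤ stage F f b ∧ stage F f a ≤ f → (a, b) ∈ U.le) ∧
    (stage F f a ≥ stage F f b → (a, b) ∈ U.nlt) ∧
    ((stage F f a > stage F f b ∨ stage F f a = f + 1) → (a, b) ∈ U.nle) ∧
    (stage F f a + 1 = stage F f b → (a, b) ∈ U.imm)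

section Column

variable {α : Type*} {F : Set α → Set α} {f : ℕ} {U : Quint α} {b : α}

theorem mem_imm_of_lower (hF : Monotone F) (hf : F^[f + 1] ∅ = F^[f] ∅) (hU : G F U = U)
    (ih : ∀ c, stage F f c < stage F f b → IntendedColumnLE F f U c) {c : α}
    (hc : stage F f c + 1 = stage F f b) : (c, b) ∈ U.imm := by
  have hb_le := stage_le_succ (F := F) (f := f) b
  have hcf : stage F f c ≤ f := by omega
  have ihc := fun a => ih c (by omega) a
  rw [← hU]
  refine ⟨hF (fun a ha => (ihc a).1 ha) (mem_map_setOf_stage_lt hF hf hcf), fun hmem => ?_, ?_⟩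
  · have := stage_le_of_mem_map hF hf (x := b) (y := c) (fun a ha => ?_) hmem
    · omega
    · by_contra h
      exact ha ((ihc a).2.2.1 (not_lt.1 h))
  · by_cases hbf : stage F f b ≤ f
    · refine Or.inl (hF (fun a ha => (ihc a).2.1 ?_) (mem_map_setOf_stage_lt hF hf hbf))
      have ha : stage F f a < stage F f b := ha
      omega
    · refine Or.inr fun x hx => ?_
      have hxf := (stage_le_of_mem_map hF hf (y := b) (fun a ha => ?_) hx).2
      · refine hF (fun a ha => (ihc a).1 ?_) (mem_map_setOf_stage_lt hF hf hxf)
        have ha : stage F f a < stage F f x := ha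
        omega
      · by_contra h
        have h : stage F f b ≤ stage F f a := not_lt.1 h
        have := stage_le_succ (F := F) (f := f) a
        exact ha ((ihc a).2.2.2.1 (Or.inr (by omega)))

theorem mem_lt_of_lower (hF : Monotone F) (hf : F^[f + 1] ∅ = F^[f] ∅)
    (hfmin : ∀ j : ℕ, F^[j + 1] ∅ = F^[j] ∅ → f ≤ j) (hU : G F U = U)
    (ih : ∀ c, stage F f c < stage F f b → IntendedColumnLE F f U c) {a : α}
    (ha : stage F f a < stage F f b) : (a, b) ∈ U.lt := by
  have := one_le_stage (F := F) (f := f) a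
  have := stage_le_succ (F := F) (f := f) b
  obtain ⟨c, hc⟩ := exists_stage_eq hF hf hfmin (m := stage F f b - 1) (by omega) (by omega)
  rw [← hU]
  exact ⟨c, (ih c (by omega) a).2.1 ⟨by omega, by omega⟩, mem_imm_of_lower hF hf hU ih (by omega)⟩

theorem mem_nlt_of_lower (hF : Monotone F) (hf : F^[f + 1] ∅ = F^[f] ∅)
    (hfmin : ∀ j : ℕ, F^[j + 1] ∅ = F^[j] ∅ → f ≤ j) (hU : G F U = U)
    (ih : ∀ c, stage F f c < stage F f b → IntendedColumnLE F f U c) {a : α}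
    (ha : stage F f a ≥ stage F f b) : (a, b) ∈ U.nlt := by
  have := one_le_stage (F := F) (f := f) b
  have := stage_le_succ (F := F) (f := f) b
  rw [← hU]
  rcases Nat.lt_or_ge (stage F f b) 2 with hb | hb
  · rcases Nat.eq_zero_or_pos f with hf0 | hf0
    · exact Or.inr (Or.inr (by simpa [hf0] using hf))
    · exact Or.inl ((mem_iterate_empty_iff hF hf b 1).2 ⟨by omega, by omega⟩)
  · obtain ⟨c, hc⟩ := exists_stage_eq hF hf hfmin (m := stage F f b - 1) (by omega) (by omega)
    exact Or.inr (Or.inl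
      ⟨c, (ih c (by omega) a).2.2.2.1 (Or.inl (by omega)), mem_imm_of_lower hF hf hU ih (by omega)⟩)

theorem mem_le_of_lower (hF : Monotone F) (hf : F^[f + 1] ∅ = F^[f] ∅)
    (hfmin : ∀ j : ℕ, F^[j + 1] ∅ = F^[j] ∅ → f ≤ j) (hU : G F U = U)
    (ih : ∀ c, stage F f c < stage F f b → IntendedColumnLE F f U c) {a : α}
    (ha : stage F f a ≤ stage F f b ∧ stage F f a ≤ f) : (a, b) ∈ U.le := by
  rw [← hU]
  exact hF (fun c hc => mem_lt_of_lower hF hf hfmin hU ih (lt_of_lt_of_le hc ha.1))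
    (mem_map_setOf_stage_lt hF hf ha.2)

theorem mem_nle_of_lower (hF : Monotone F) (hf : F^[f + 1] ∅ = F^[f] ∅)
    (hfmin : ∀ j : ℕ, F^[j + 1] ∅ = F^[j] ∅ → f ≤ j) (hU : G F U = U)
    (ih : ∀ c, stage F f c < stage F f b → IntendedColumnLE F f U c) {a : α}
    (ha : stage F f a > stage F f b ∨ stage F f a = f + 1) : (a, b) ∈ U.nle := by
  rw [← hU]
  intro ha'
  have := stage_le_of_mem_map hF hf (x := a) (y := b) (fun c hc => ?_) ha'
  · omega
  · by_contra h
    exact hc (mem_nlt_of_lower hF hf hfmin hU ih (not_lt.1 h))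

theorem intendedColumnLE_of_isFixedPt (hF : Monotone F) (hf : F^[f + 1] ∅ = F^[f] ∅)
    (hfmin : ∀ j : ℕ, F^[j + 1] ∅ = F^[j] ∅ → f ≤ j) (hU : G F U = U) (b : α) :
    IntendedColumnLE F f U b := by
  induction b using (measure (stage F f)).wf.induction with
  | h b ih =>
    exact fun a => ⟨mem_lt_of_lower hF hf hfmin hU ih, mem_le_of_lower hF hf hfmin hU ih,
      mem_nlt_of_lower hF hf hfmin hU ih, mem_nle_of_lower hF hf hfmin hU ih,
      mem_imm_of_lower hF hf hU ih⟩

end Column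

theorem intended_relations_derivable
    {α : Type*} [Fintype α] (F : Set α → Set α) (hF : Monotone F)
    (f : ℕ) (hf : F^[f + 1] ∅ = F^[f] ∅)
    (hfmin : ∀ j : ℕ, F^[j + 1] ∅ = F^[j] ∅ → f ≤ j) :
    (∀ a b : α, stage F f a < stage F f b →
        (a, b) ∈ (⨆ n : ℕ, (G F)^[n] (⊥ : Quint α)).lt) ∧
    (∀ a b : α, stage F f a ≤ stage F f b ∧ stage F f a ≤ f →
        (a, b) ∈ (⨆ n : ℕ, (G F)^[n] (⊥ : Quint α)).le) ∧
    (∀ a b : α, stage F f a ≥ stage F f b →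
        (a, b) ∈ (⨆ n : ℕ, (G F)^[n] (⊥ : Quint α)).nlt) ∧
    (∀ a b : α, (stage F f a > stage F f b ∨ stage F f a = f + 1) →
        (a, b) ∈ (⨆ n : ℕ, (G F)^[n] (⊥ : Quint α)).nle) ∧
    (∀ a b : α, stage F f a + 1 = stage F f b →
        (a, b) ∈ (⨆ n : ℕ, (G F)^[n] (⊥ : Quint α)).imm) := by
  have hcol := intendedColumnLE_of_isFixedPt hF hf hfmin (monotone_G hF).map_iSup_iterate_bot
  exact ⟨fun a b => (hcol b a).1, fun a b => (hcol b a).2.1, fun a b => (hcol b a).2.2.1,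
    fun a b => (hcol b a).2.2.2.1, fun a b => (hcol b a).2.2.2.2⟩
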